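/- Let n ≥ 1, let v ∈ ℝ^n, let α > 0 and 1 ≤ a ≤ n be such that |v_i| ≥ α for all i ∈ [a], and let x be uniformly distributed on {-1,1}^n. Then for every t ∈ ℝ, Pr[|⟨v,x⟩ - t| < α] ≤ binom(a, ⌊a/2⌋) / 2^a. In particular, Q(α, ⟨v,x⟩) ≤ binom(a, ⌊a/2⌋)/2^a = O(1/√a). -/

import Mathlib

/-!
Flipping the signs of the coordinates `i` with `v i < 0` permutes the cube and turns `⟨v, x⟩`
into `⟨|v|, x⟩ = 2 ∑_{i ∈ A} |v i| - ∑ |v i|`, where `A` is the set of coordinates with `x i = 1`.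
The event `|⟨v, x⟩ - t| < α` thus says that `∑_{i ∈ A} |v i|` lies in an open interval of
length `α`. Fix the part of `A` outside the first `a` coordinates: enlarging `A` inside them
raises the sum by at least `α`, so the admissible traces on the first `a` coordinates form an
antichain, of size at most `binom(a, ⌊a/2⌋)` by Sperner's theorem. Summing over the `2^(n-a)`
choices outside gives the bound. For `O(1/√a)`, the strengthened invariant
`binom(2m, m)² (3m + 1) ≤ 16^m` survives induction on `m`, while `binom(2m, m)² · 2m ≤ 16^m`
alone does not.
-/

open MeasureTheory

/-- The uniform measure on `{-1,1}^n ⊂ ℝ^n`: coordinates independent, each `±1` with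
probability `1/2`. -/
noncomputable def uniformCube (n : ℕ) : Measure (Fin n → ℝ) :=
  Measure.pi fun _ =>
    (2⁻¹ : ENNReal) • Measure.dirac (1 : ℝ) + (2⁻¹ : ENNReal) • Measure.dirac (-1 : ℝ)

open Finset

namespace Nat

lemma centralBinom_sq_mul_le (m : ℕ) : centralBinom m ^ 2 * (3 * m + 1) ≤ 16 ^ m := by
  induction m with
  | zero => simp
  | succ m ih =>
    have hpoly : (2 * (2 * m + 1)) ^ 2 * (3 * m + 4) ≤ 16 * (m + 1) ^ 2 * (3 * m + 1) := by
      nlinarith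
    refine Nat.le_of_mul_le_mul_right (c := (m + 1) ^ 2) ?_ (by positivity)
    calc centralBinom (m + 1) ^ 2 * (3 * (m + 1) + 1) * (m + 1) ^ 2
        = ((m + 1) * centralBinom (m + 1)) ^ 2 * (3 * m + 4) := by ring
      _ = (2 * (2 * m + 1)) ^ 2 * (3 * m + 4) * centralBinom m ^ 2 := by
        rw [succ_mul_centralBinom_succ]; ring
      _ ≤ 16 * (m + 1) ^ 2 * (3 * m + 1) * centralBinom m ^ 2 := Nat.mul_le_mul_right _ hpoly
      _ = 16 * (m + 1) ^ 2 * (centralBinom m ^ 2 * (3 * m + 1)) := by ring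
      _ ≤ 16 * (m + 1) ^ 2 * 16 ^ m := Nat.mul_le_mul_left _ ih
      _ = 16 ^ (m + 1) * (m + 1) ^ 2 := by ring

lemma centralBinom_succ_eq_two_mul_choose (m : ℕ) :
    centralBinom (m + 1) = 2 * (2 * m + 1).choose m := by
  rw [centralBinom_eq_two_mul_choose, show 2 * (m + 1) = 2 * m + 1 + 1 by ring, choose_succ_succ',
    choose_symm_half, ← two_mul]

lemma choose_half_sq_mul_le (a : ℕ) : a.choose (a / 2) ^ 2 * a ≤ 4 ^ a := by
  obtain ⟨m, rfl | rfl⟩ := even_or_odd' a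
  · rw [Nat.mul_div_cancel_left m two_pos, ← centralBinom_eq_two_mul_choose, pow_mul]
    exact (Nat.mul_le_mul_left _ (by omega)).trans (centralBinom_sq_mul_le m)
  · have h := centralBinom_sq_mul_le (m + 1)
    rw [centralBinom_succ_eq_two_mul_choose] at h
    rw [show (2 * m + 1) / 2 = m by omega]
    refine Nat.le_of_mul_le_mul_right (c := 4) ?_ four_pos
    calc (2 * m + 1).choose m ^ 2 * (2 * m + 1) * 4
        ≤ (2 * (2 * m + 1).choose m) ^ 2 * (3 * (m + 1) + 1) := by nlinarith
      _ ≤ 16 ^ (m + 1) := h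
      _ = 4 ^ (2 * m + 1) * 4 := by rw [pow_succ, pow_succ, pow_mul]; ring

end Nat

lemma choose_half_mul_sqrt_le_two_pow (a : ℕ) : (a.choose (a / 2) : ℝ) * √a ≤ 2 ^ a := by
  refine (pow_le_pow_iff_left₀ (by positivity) (by positivity) two_ne_zero).1 ?_
  calc ((a.choose (a / 2) : ℝ) * √a) ^ 2 = (a.choose (a / 2) ^ 2 * a : ℕ) := by
        push_cast; rw [mul_pow, Real.sq_sqrt (Nat.cast_nonneg a)]
    _ ≤ (4 ^ a : ℕ) := Nat.cast_le.2 (Nat.choose_half_sq_mul_le a)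
    _ = (2 ^ a) ^ 2 := by push_cast; rw [← pow_mul, mul_comm, pow_mul]; norm_num

section LittlewoodOfford

variable {ι : Type*} [DecidableEq ι]

lemma IsAntichain.card_le_choose_of_forall_subset {𝒜 : Finset (Finset ι)} {s : Finset ι}
    (h𝒜 : IsAntichain (· ⊆ ·) (𝒜 : Set (Finset ι))) (hs : ∀ A ∈ 𝒜, A ⊆ s) :
    #𝒜 ≤ (#s).choose (#s / 2) := by
  set e : Finset s ↪o Finset ι := Finset.mapEmbedding (Function.Embedding.subtype (· ∈ s))
  have he : ∀ A ∈ 𝒜, e (A.subtype (· ∈ s)) = A := fun A hA => subtype_map_of_mem (hs A hA)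
  have hanti : IsAntichain (· ⊆ ·) (e ⁻¹' 𝒜 : Set (Finset s)) := h𝒜.preimage_embedding e
  calc #𝒜 ≤ #(univ.filter fun A' => e A' ∈ 𝒜) :=
        card_le_card_of_injOn (fun A => A.subtype (· ∈ s))
          (fun A hA => by simp [he A hA, mem_coe.1 hA])
          (fun A hA B hB hAB => by rw [← he A hA, ← he B hB]; exact congrArg e hAB)
    _ ≤ (Fintype.card s).choose (Fintype.card s / 2) :=
        IsAntichain.sperner (by convert hanti; ext; simp)
    _ = (#s).choose (#s / 2) := by rw [Fintype.card_coe]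

lemma isAntichain_setOf_subset_sum_mem_Ioo {u : ι → ℝ} {s : Finset ι} {α : ℝ} (hα : 0 ≤ α)
    (hu : ∀ i ∈ s, α ≤ u i) (c : ℝ) :
    IsAntichain (· ⊆ ·) {A : Finset ι | A ⊆ s ∧ ∑ i ∈ A, u i ∈ Set.Ioo c (c + α)} := by
  rintro A ⟨-, hA⟩ B ⟨hBs, hB⟩ hne hAB
  obtain ⟨j, hj⟩ : (B \ A).Nonempty := sdiff_nonempty.2 fun hBA => hne (hAB.antisymm hBA)
  have hu' : ∀ i ∈ B \ A, α ≤ u i := fun i hi => hu i (hBs (sdiff_subset hi))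
  have : α ≤ ∑ i ∈ B \ A, u i :=
    (hu' j hj).trans (single_le_sum (fun i hi => hα.trans (hu' i hi)) hj)
  rw [← sum_sdiff hAB] at hB
  linarith [hA.1, hB.2]

variable [Fintype ι]

lemma card_filter_sum_mem_Ioo_le {u : ι → ℝ} {s : Finset ι} {α : ℝ} (hα : 0 ≤ α)
    (hu : ∀ i ∈ s, α ≤ u i) (c : ℝ) :
    #{A : Finset ι | ∑ i ∈ A, u i ∈ Set.Ioo c (c + α)} ≤ (#s).choose (#s / 2) * 2 ^ #sᶜ := by
  rw [← card_powerset]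
  refine card_le_mul_card_image_of_maps_to (f := (· \ s))
    (fun A _ => mem_powerset.2 fun i hi => mem_compl.2 (mem_sdiff.1 hi).2) _ fun B _ => ?_
  set 𝒜 : Finset (Finset ι) := {A : Finset ι | ∑ i ∈ A, u i ∈ Set.Ioo c (c + α)}
  have hsub : ({A ∈ 𝒜 | A \ s = B}.image (· ∩ s) : Set (Finset ι)) ⊆
      {A | A ⊆ s ∧ ∑ i ∈ A, u i ∈ Set.Ioo (c - ∑ i ∈ B, u i) (c - ∑ i ∈ B, u i + α)} := by
    intro A' hA'
    obtain ⟨A, hA, rfl⟩ := mem_image.1 hA'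
    simp only [𝒜, mem_filter, mem_univ, true_and, Set.mem_Ioo] at hA
    rw [← sum_inter_add_sum_sdiff A s, hA.2] at hA
    exact ⟨inter_subset_right, by constructor <;> linarith [hA.1.1, hA.1.2]⟩
  calc #{A ∈ 𝒜 | A \ s = B} = #({A ∈ 𝒜 | A \ s = B}.image (· ∩ s)) := by
        refine (card_image_of_injOn fun A hA A' hA' h => ?_).symm
        simp only [coe_filter] at hA hA'
        calc A = A ∩ s ∪ B := by rw [← hA.2]; exact (sup_inf_sdiff A s).symm
          _ = A' ∩ s ∪ B := by rw [h]
          _ = A' := by rw [← hA'.2]; exact sup_inf_sdiff A' s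
    _ ≤ _ := IsAntichain.card_le_choose_of_forall_subset
          ((isAntichain_setOf_subset_sum_mem_Ioo hα hu _).subset hsub)
          fun A hA => (hsub hA).1

end LittlewoodOfford

section SignVector

variable {ι : Type*} [DecidableEq ι]

def signVector (A : Finset ι) (i : ι) : ℝ := if i ∈ A then 1 else -1

lemma mul_signVector_symmDiff (w : ι → ℝ) (N A : Finset ι) (hN : ∀ i, i ∈ N ↔ w i < 0) (i : ι) :
    w i * signVector (symmDiff A N) i = |w i| * signVector A i := by
  by_cases h : w i < 0 <;> by_cases hA : i ∈ A <;>
    simp [signVector, mem_symmDiff, hN, h, hA, abs_of_neg, abs_of_nonneg, not_lt.1]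

variable [Fintype ι]

lemma sum_mul_signVector (u : ι → ℝ) (A : Finset ι) :
    ∑ i, u i * signVector A i = 2 * ∑ i ∈ A, u i - ∑ i, u i := by
  have h : ∀ i, u i * signVector A i = 2 * (if i ∈ A then u i else 0) - u i := by
    intro i; unfold signVector; split_ifs <;> ring
  rw [sum_congr rfl fun i _ => h i, sum_sub_distrib, ← mul_sum, sum_ite_mem, univ_inter]

lemma card_filter_abs_sum_mul_signVector_sub_lt_le (w : ι → ℝ) {s : Finset ι} {α : ℝ}
    (hα : 0 ≤ α) (hw : ∀ i ∈ s, α ≤ |w i|) (t : ℝ) :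
    #{A : Finset ι | |∑ i, w i * signVector A i - t| < α} ≤ (#s).choose (#s / 2) * 2 ^ #sᶜ := by
  set N : Finset ι := {i | w i < 0}
  set c := (t - α + ∑ i, |w i|) / 2
  calc #{A : Finset ι | |∑ i, w i * signVector A i - t| < α}
      = #{A : Finset ι | |∑ i, w i * signVector (symmDiff A N) i - t| < α} :=
        card_nbij' (symmDiff · N) (symmDiff · N) (fun A => by simp) (fun A => by simp)
          (fun A => by simp) (fun A => by simp)
    _ = #{A : Finset ι | ∑ i ∈ A, |w i| ∈ Set.Ioo c (c + α)} := by
        congr 1; refine filter_congr fun A _ => ?_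
        simp only [mul_signVector_symmDiff w N A (by simp [N]), sum_mul_signVector, abs_sub_lt_iff,
          Set.mem_Ioo, c]
        constructor <;> intro h <;> constructor <;> linarith [h.1, h.2]
    _ ≤ _ := card_filter_sum_mem_Ioo_le hα hw c

end SignVector

lemma uniformCube_eq_sum (n : ℕ) :
    uniformCube n = ∑ A : Finset (Fin n), (2⁻¹ : ENNReal) ^ n • Measure.dirac (signVector A) := by
  unfold uniformCube
  set coin : Measure ℝ := (2⁻¹ : ENNReal) • Measure.dirac 1 + (2⁻¹ : ENNReal) • Measure.dirac (-1)
  have : IsFiniteMeasure coin := by constructor; simp [coin]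
  refine Measure.pi_eq fun S _ => ?_
  simp only [coin, Measure.coe_finsetSum, Finset.sum_apply, Measure.smul_apply, Measure.add_apply,
    Measure.dirac_apply, smul_eq_mul]
  rw [prod_add, powerset_univ]
  refine sum_congr rfl fun A _ => ?_
  have hpi : (Set.univ.pi S).indicator 1 (signVector A) =
      ∏ i, (S i).indicator (1 : ℝ → ENNReal) (signVector A i) := by
    classical
    simp [Set.indicator_apply, prod_boole]
  have hpow : (2⁻¹ : ENNReal) ^ n = ∏ _i : Fin n, 2⁻¹ := by simp
  rw [hpi, hpow, ← prod_mul_distrib, ← prod_mul_prod_compl A, compl_eq_univ_sdiff]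
  congr 1 <;> refine prod_congr rfl fun i hi => ?_
  · simp [signVector, hi]
  · simp [signVector, (mem_sdiff.1 hi).2]

lemma uniformCube_apply (n : ℕ) (S : Set (Fin n → ℝ)) [DecidablePred (· ∈ S)] :
    uniformCube n S = (2⁻¹ : ENNReal) ^ n * #{A : Finset (Fin n) | signVector A ∈ S} := by
  simp [uniformCube_eq_sum, Measure.dirac_apply, Set.indicator_apply, sum_ite, mul_comm]

lemma uniformCube_abs_sum_sub_lt_le {n : ℕ} (v : Fin n → ℝ) {α : ℝ} (hα : 0 ≤ α)
    {s : Finset (Fin n)} (hv : ∀ i ∈ s, α ≤ |v i|) (t : ℝ) :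
    uniformCube n {x | |∑ i, v i * x i - t| < α} ≤
      ENNReal.ofReal ((#s).choose (#s / 2) / 2 ^ #s) := by
  classical
  have hcount := card_filter_abs_sum_mul_signVector_sub_lt_le v hα hv t
  rw [uniformCube_apply]
  calc (2⁻¹ : ENNReal) ^ n * #{A : Finset (Fin n) | signVector A ∈ {x | |∑ i, v i * x i - t| < α}}
      ≤ (2⁻¹ : ENNReal) ^ n * ((#s).choose (#s / 2) * 2 ^ #sᶜ : ℕ) := by
        gcongr; exact le_of_eq_of_le (by congr 1) hcount
    _ = ENNReal.ofReal ((#s).choose (#s / 2) / 2 ^ #s) := by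
        have hcancel : (2⁻¹ : ENNReal) ^ #sᶜ * 2 ^ #sᶜ = 1 := by
          rw [← mul_pow, ENNReal.inv_mul_cancel two_ne_zero ENNReal.ofNat_ne_top, one_pow]
        have hn : (2⁻¹ : ENNReal) ^ n = 2⁻¹ ^ #s * 2⁻¹ ^ #sᶜ := by
          rw [← pow_add, card_add_card_compl, Fintype.card_fin]
        rw [hn, ENNReal.ofReal_div_of_pos (by positivity), ENNReal.ofReal_natCast,
          ENNReal.ofReal_pow zero_le_two, ENNReal.ofReal_ofNat, ENNReal.div_eq_inv_mul]
        push_cast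
        calc _ = (2⁻¹ : ENNReal) ^ #s * (#s).choose (#s / 2) * (2⁻¹ ^ #sᶜ * 2 ^ #sᶜ) := by ring
          _ = _ := by rw [hcancel, mul_one, ENNReal.inv_pow]

/-- if `|v i| ≥ α > 0` for all `i < a` and `x` is uniform on `{-1,1}^n`,
then for every `t`, `Pr[|⟨v,x⟩ - t| < α] ≤ binom(a, ⌊a/2⌋)/2^a`; in particular the Lévy
concentration function satisfies `Q(α, ⟨v,x⟩) ≤ binom(a, ⌊a/2⌋)/2^a = O(1/√a)`. -/
theorem stmt_10 :
    ∃ C : ℝ, 0 < C ∧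
      ∀ (n : ℕ), 1 ≤ n →
        ∀ (v : Fin n → ℝ) (α : ℝ), 0 < α →
          ∀ (a : ℕ), 1 ≤ a → a ≤ n →
            (∀ i : Fin n, (i : ℕ) < a → α ≤ |v i|) →
            (∀ t : ℝ,
              uniformCube n {x | |(∑ i, v i * x i) - t| < α} ≤
                ENNReal.ofReal ((a.choose (a / 2) : ℝ) / 2 ^ a)) ∧
            (⨆ t : ℝ, uniformCube n {x | |(∑ i, v i * x i) - t| < α}) ≤
                ENNReal.ofReal ((a.choose (a / 2) : ℝ) / 2 ^ a) ∧
            (a.choose (a / 2) : ℝ) / 2 ^ a ≤ C / Real.sqrt a := by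
  refine ⟨1, one_pos, fun n _ v α hα a ha han hv => ?_⟩
  set s : Finset (Fin n) := {i | (i : ℕ) < a}
  have hs : #s = a := by simp [s, Fin.card_filter_val_lt, han]
  have hbound (t : ℝ) : uniformCube n {x | |(∑ i, v i * x i) - t| < α} ≤
      ENNReal.ofReal ((a.choose (a / 2) : ℝ) / 2 ^ a) :=
    hs ▸ uniformCube_abs_sum_sub_lt_le v hα.le (fun i hi => hv i (by simpa [s] using hi)) t
  refine ⟨hbound, iSup_le hbound, ?_⟩
  rw [div_le_div_iff₀ (by positivity) (Real.sqrt_pos.2 (Nat.cast_pos.2 ha)), one_mul]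
  exact choose_half_mul_sqrt_le_two_pow a
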